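/- arXiv:2101.10506 — 2 statements merged into one kernel-verified Lean document; each statement's English description precedes it below -/
import Mathlib

section
/- Let π be a policy for a finite MDP such that the induced state Markov chain is irreducible with stationary distribution μ^π satisfying μ^π(s) ≥ μ > 0 for all s, and suppose π(a|s) ≥ ε/|A| for all s,a. Define the matrix Ā^π = M^π(γP^π − I), where M^π = diag(μ^π(s)π(a|s)) on S×A and P^π_{(s,a),(s',a')} = P(s'|s,a)π(a'|s'). Then for every θ ∈ ℝ^{|S||A|}, θ^T Ā^π θ ≤ −(1−γ)·(ε μ/|A|)·‖θ‖². -/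
/-- Negative-drift lemma: if `μ^π(s) ≥ μ > 0` and `π(a|s) ≥ ε/|A|`, then the matrix
`Ā^π = M^π(γP^π - I)`, with `M^π = diag(μ^π(s)π(a|s))` and
`P^π_{(s,a),(s',a')} = P(s'|s,a)π(a'|s')`, satisfies
`θᵀ Ā^π θ ≤ -(1-γ)(ε μ/|A|)‖θ‖²` for all `θ`. -/
theorem negative_drift {S A : Type*} [Fintype S] [Fintype A] [DecidableEq S] [DecidableEq A]
    (P : S → A → S → ℝ) (hP0 : ∀ s a s', 0 ≤ P s a s') (hP1 : ∀ s a, ∑ s', P s a s' = 1)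
    (γ : ℝ) (hγ0 : 0 < γ) (hγ1 : γ < 1)
    (π : S → A → ℝ) (hπ0 : ∀ s a, 0 ≤ π s a) (hπ1 : ∀ s, ∑ a, π s a = 1)
    (ε : ℝ) (hε : 0 < ε) (hπε : ∀ s a, ε / (Fintype.card A : ℝ) ≤ π s a)
    (μπ : S → ℝ) (μ : ℝ) (hμ : 0 < μ) (hμπ : ∀ s, μ ≤ μπ s)
    (hstat : ∀ s', ∑ s, ∑ a, μπ s * π s a * P s a s' = μπ s')
    (θ : S × A → ℝ) :
    ∑ x : S × A, ∑ y : S × A,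
        θ x * (μπ x.1 * π x.1 x.2 *
          (γ * P x.1 x.2 y.1 * π y.1 y.2 - (if x = y then 1 else 0))) * θ y
      ≤ -(1 - γ) * (ε * μ / (Fintype.card A : ℝ)) * ∑ x, (θ x) ^ 2 := by
  set m : S × A → ℝ := fun x => μπ x.1 * π x.1 x.2 with hm
  set K : S × A → S × A → ℝ := fun x y => P x.1 x.2 y.1 * π y.1 y.2 with hK
  have hμπ0 : ∀ s, 0 ≤ μπ s := fun s => le_trans hμ.le (hμπ s)
  have hm0 : ∀ x, 0 ≤ m x := fun x => mul_nonneg (hμπ0 _) (hπ0 _ _)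
  have hK0 : ∀ x y, 0 ≤ K x y := fun x y => mul_nonneg (hP0 _ _ _) (hπ0 _ _)
  have hKrow : ∀ x : S × A, ∑ y, K x y = 1 := by
    intro x
    rw [Fintype.sum_prod_type]
    simp only [hK]
    calc ∑ s', ∑ a', P x.1 x.2 s' * π s' a'
        = ∑ s', P x.1 x.2 s' * ∑ a', π s' a' := by
          refine Finset.sum_congr rfl fun s' _ => ?_; rw [Finset.mul_sum]
      _ = 1 := by simp only [hπ1, mul_one]; exact hP1 _ _
  have hstat' : ∀ y : S × A, ∑ x, m x * K x y = m y := by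
    intro y
    rw [Fintype.sum_prod_type]
    simp only [hm, hK]
    calc ∑ s, ∑ a, μπ s * π s a * (P s a y.1 * π y.1 y.2)
        = (∑ s, ∑ a, μπ s * π s a * P s a y.1) * π y.1 y.2 := by
          rw [Finset.sum_mul]
          refine Finset.sum_congr rfl fun s _ => ?_
          rw [Finset.sum_mul]
          exact Finset.sum_congr rfl fun a _ => by ring
      _ = μπ y.1 * π y.1 y.2 := by rw [hstat]
  set Sq : ℝ := ∑ x, m x * θ x ^ 2 with hSq
  have expand : ∑ x : S × A, ∑ y : S × A,
      θ x * (m x * (γ * (P x.1 x.2 y.1) * π y.1 y.2 - (if x = y then 1 else 0))) * θ y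
      = γ * (∑ x, ∑ y, m x * K x y * (θ x * θ y)) - Sq := by
    rw [Finset.mul_sum, ← Finset.sum_sub_distrib]
    refine Finset.sum_congr rfl fun x _ => ?_
    rw [Finset.mul_sum]
    have : ∀ y, θ x * (m x * (γ * (P x.1 x.2 y.1) * π y.1 y.2 - (if x = y then 1 else 0))) * θ y
        = γ * (m x * K x y * (θ x * θ y)) - (if x = y then m x * θ x ^ 2 else 0) := by
      intro y
      simp only [hK]
      split_ifs with h
      · subst h; ring
      · ring
    rw [Finset.sum_congr rfl fun y _ => this y, Finset.sum_sub_distrib,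
      Finset.sum_ite_eq Finset.univ x (fun _ => m x * θ x ^ 2)]
    simp
  have hQS : (∑ x, ∑ y, m x * K x y * (θ x * θ y)) ≤ Sq := by
    have step : (∑ x, ∑ y, m x * K x y * (θ x * θ y))
        ≤ ∑ x, ∑ y, m x * K x y * ((θ x ^ 2 + θ y ^ 2) / 2) := by
      refine Finset.sum_le_sum fun x _ => Finset.sum_le_sum fun y _ => ?_
      refine mul_le_mul_of_nonneg_left ?_ (mul_nonneg (hm0 x) (hK0 x y))
      nlinarith [sq_nonneg (θ x - θ y)]
    refine step.trans ?_
    have : (∑ x, ∑ y, m x * K x y * ((θ x ^ 2 + θ y ^ 2) / 2))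
        = (∑ x, ∑ y, m x * K x y * (θ x ^ 2 / 2)) + ∑ x, ∑ y, m x * K x y * (θ y ^ 2 / 2) := by
      rw [← Finset.sum_add_distrib]
      refine Finset.sum_congr rfl fun x _ => ?_
      rw [← Finset.sum_add_distrib]
      exact Finset.sum_congr rfl fun y _ => by ring
    rw [this]
    have h1 : (∑ x, ∑ y, m x * K x y * (θ x ^ 2 / 2)) = Sq / 2 := by
      rw [hSq, Finset.sum_div]
      refine Finset.sum_congr rfl fun x _ => ?_
      calc ∑ y, m x * K x y * (θ x ^ 2 / 2)
          = (∑ y, K x y) * (m x * (θ x ^ 2 / 2)) := by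
            rw [Finset.sum_mul]; exact Finset.sum_congr rfl fun y _ => by ring
        _ = m x * θ x ^ 2 / 2 := by rw [hKrow]; ring
    have h2 : (∑ x, ∑ y, m x * K x y * (θ y ^ 2 / 2)) = Sq / 2 := by
      rw [Finset.sum_comm, hSq, Finset.sum_div]
      refine Finset.sum_congr rfl fun y _ => ?_
      calc ∑ x, m x * K x y * (θ y ^ 2 / 2)
          = (∑ x, m x * K x y) * (θ y ^ 2 / 2) := by
            rw [Finset.sum_mul]
        _ = m y * θ y ^ 2 / 2 := by rw [hstat']; ring
    rw [h1, h2]; linarith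
  have hSlb : (ε * μ / (Fintype.card A : ℝ)) * (∑ x, (θ x) ^ 2) ≤ Sq := by
    rw [hSq, Finset.mul_sum]
    refine Finset.sum_le_sum fun x _ => ?_
    refine mul_le_mul_of_nonneg_right ?_ (sq_nonneg _)
    have : ε * μ / (Fintype.card A : ℝ) = μ * (ε / (Fintype.card A : ℝ)) := by ring
    rw [this]
    exact mul_le_mul (hμπ _) (hπε _ _) (div_nonneg hε.le (Nat.cast_nonneg _)) (hμπ0 _)
  calc ∑ x : S × A, ∑ y : S × A,
      θ x * (μπ x.1 * π x.1 x.2 * (γ * P x.1 x.2 y.1 * π y.1 y.2 - (if x = y then 1 else 0))) * θ y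
      = γ * (∑ x, ∑ y, m x * K x y * (θ x * θ y)) - Sq := expand
    _ ≤ γ * Sq - Sq := by nlinarith
    _ = -(1 - γ) * Sq := by ring
    _ ≤ -(1 - γ) * ((ε * μ / (Fintype.card A : ℝ)) * ∑ x, (θ x) ^ 2) := by
        have h1γ : 0 < 1 - γ := by linarith
        nlinarith
    _ = -(1 - γ) * (ε * μ / (Fintype.card A : ℝ)) * ∑ x, (θ x) ^ 2 := by ring
end

section
/- For a finite MDP with rewards in [0,1] and discount γ ∈ (0,1), the map π ↦ Q^π satisfies ‖Q^{π_1} − Q^{π_2}‖ ≤ (γ |S| |A| / (1−γ)²) ‖π_1 − π_2‖, where both norms are Euclidean norms on the vectorized objects. -/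
/-!
Unrolling the Bellman recursion, `V^π = ∑ₖ γᵏ (P^π)ᵏ r^π`. Swapping `π₂` for `π₁` in one of the
`k + 1` policy averages that make up `(P^π)ᵏ r^π` moves it by at most
`δ = ∑_{s,a} |π₁ s a - π₂ s a|`, and the remaining averagings are stochastic, hence do not
increase sup norms; so the `k`-th terms differ by at most `(k + 1) δ`. Since `∑ₖ (k + 1) γᵏ = 1 / (1 - γ)²`,
this gives `|V₁ - V₂| ≤ δ / (1 - γ)²` and `|Q₁ - Q₂| ≤ γ δ / (1 - γ)²` pointwise. Comparing
`ℓ¹`, `ℓ²` and `ℓ^∞` norms on the `|S| |A|` coordinates costs a factor `√(|S| |A|)` twice.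
-/

open Finset

section FiniteSums

variable {ι : Type*} [Fintype ι]

theorem abs_sum_mul_le_sum_abs_mul {w x : ι → ℝ} {C : ℝ} (hx : ∀ i, |x i| ≤ C) :
    |∑ i, w i * x i| ≤ (∑ i, |w i|) * C := by
  calc |∑ i, w i * x i| ≤ ∑ i, |w i| * |x i| := by
        simpa only [abs_mul] using abs_sum_le_sum_abs (fun i => w i * x i) univ
    _ ≤ ∑ i, |w i| * C := sum_le_sum fun i _ => mul_le_mul_of_nonneg_left (hx i) (abs_nonneg _)
    _ = (∑ i, |w i|) * C := (sum_mul ..).symm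

theorem sum_abs_of_mem_stdSimplex {w : ι → ℝ} (hw : w ∈ stdSimplex ℝ ι) : ∑ i, |w i| = 1 := by
  simpa only [abs_of_nonneg (hw.1 _)] using hw.2

theorem abs_sum_mul_le_of_mem_stdSimplex {w x : ι → ℝ} {C : ℝ} (hw : w ∈ stdSimplex ℝ ι)
    (hx : ∀ i, |x i| ≤ C) : |∑ i, w i * x i| ≤ C := by
  simpa only [sum_abs_of_mem_stdSimplex hw, one_mul] using abs_sum_mul_le_sum_abs_mul (w := w) hx

theorem abs_sum_mul_sub_sum_mul_le {w v x : ι → ℝ} {C : ℝ} (hx : ∀ i, |x i| ≤ C) :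
    |∑ i, w i * x i - ∑ i, v i * x i| ≤ (∑ i, |w i - v i|) * C := by
  simpa only [Pi.sub_apply, ← sum_sub_distrib, ← sub_mul] using
    abs_sum_mul_le_sum_abs_mul (w := w - v) hx

theorem sqrt_sum_sq_le_sqrt_card_mul {x : ι → ℝ} {B : ℝ} (hx : ∀ i, |x i| ≤ B) :
    √(∑ i, x i ^ 2) ≤ √(Fintype.card ι) * B := by
  rcases isEmpty_or_nonempty ι with hι | ⟨⟨i₀⟩⟩
  · simp
  have hB : 0 ≤ B := (abs_nonneg _).trans (hx i₀)
  calc √(∑ i, x i ^ 2) ≤ √(∑ _i : ι, B ^ 2) :=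
        Real.sqrt_le_sqrt <| sum_le_sum fun i _ =>
          sq_le_sq.mpr <| (hx i).trans_eq (abs_of_nonneg hB).symm
    _ = √(Fintype.card ι) * B := by
        rw [sum_const, card_univ, nsmul_eq_mul, Real.sqrt_mul (Nat.cast_nonneg _),
          Real.sqrt_sq hB]

theorem sum_abs_le_sqrt_card_mul_sqrt_sum_sq (x : ι → ℝ) :
    ∑ i, |x i| ≤ √(Fintype.card ι) * √(∑ i, x i ^ 2) := by
  rw [← Real.sqrt_mul (Nat.cast_nonneg _), ← card_univ]
  refine Real.le_sqrt_of_sq_le ?_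
  simpa only [sq_abs] using sq_sum_le_card_mul_sum_sq (s := univ) (f := fun i => |x i|)

theorem sqrt_sum_sq_le_mul_card_mul_of_abs_le {x y : ι → ℝ} {c : ℝ} (hc : 0 ≤ c)
    (hy : ∀ i, |y i| ≤ c * ∑ j, |x j|) :
    √(∑ i, y i ^ 2) ≤ c * Fintype.card ι * √(∑ i, x i ^ 2) := by
  have hcard := Real.mul_self_sqrt (Nat.cast_nonneg (α := ℝ) (Fintype.card ι))
  calc √(∑ i, y i ^ 2) ≤ √(Fintype.card ι) * (c * ∑ j, |x j|) := sqrt_sum_sq_le_sqrt_card_mul hy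
    _ ≤ √(Fintype.card ι) * (c * (√(Fintype.card ι) * √(∑ i, x i ^ 2))) := by
        gcongr
        exact sum_abs_le_sqrt_card_mul_sqrt_sum_sq x
    _ = c * Fintype.card ι * √(∑ i, x i ^ 2) := by
        linear_combination c * √(∑ i, x i ^ 2) * hcard

end FiniteSums

section Discounting

variable {γ : ℝ}

theorem summable_pow_mul_of_abs_le_one (hγ0 : 0 ≤ γ) (hγ1 : γ < 1) {a : ℕ → ℝ}
    (ha : ∀ k, |a k| ≤ 1) : Summable fun k => γ ^ k * a k :=
  (summable_geometric_of_lt_one hγ0 hγ1).of_norm_bounded fun k => by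
    rw [Real.norm_eq_abs, abs_mul, abs_pow, abs_of_nonneg hγ0]
    exact mul_le_of_le_one_right (pow_nonneg hγ0 k) (ha k)

theorem hasSum_add_one_mul_geometric (hγ0 : 0 ≤ γ) (hγ1 : γ < 1) :
    HasSum (fun k : ℕ => ((k : ℝ) + 1) * γ ^ k) (1 / (1 - γ) ^ 2) := by
  have hγ : ‖γ‖ < 1 := by rwa [Real.norm_eq_abs, abs_of_nonneg hγ0]
  simpa using hasSum_choose_mul_geometric_of_norm_lt_one 1 hγ

theorem abs_tsum_pow_mul_sub_le (hγ0 : 0 ≤ γ) (hγ1 : γ < 1) {a b : ℕ → ℝ} {δ : ℝ}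
    (ha : ∀ k, |a k| ≤ 1) (hb : ∀ k, |b k| ≤ 1) (hab : ∀ k, |a k - b k| ≤ (k + 1) * δ) :
    |∑' k, γ ^ k * a k - ∑' k, γ ^ k * b k| ≤ δ / (1 - γ) ^ 2 := by
  have hsum : HasSum (fun k : ℕ => ((k : ℝ) + 1) * γ ^ k * δ) (δ / (1 - γ) ^ 2) := by
    simpa only [one_div, inv_mul_eq_div] using (hasSum_add_one_mul_geometric hγ0 hγ1).mul_right δ
  have hdiff : Summable fun k => γ ^ k * a k - γ ^ k * b k :=
    (summable_pow_mul_of_abs_le_one hγ0 hγ1 ha).sub (summable_pow_mul_of_abs_le_one hγ0 hγ1 hb)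
  rw [← (summable_pow_mul_of_abs_le_one hγ0 hγ1 ha).tsum_sub
    (summable_pow_mul_of_abs_le_one hγ0 hγ1 hb), ← hsum.tsum_eq]
  calc |∑' k, (γ ^ k * a k - γ ^ k * b k)| ≤ ∑' k, |γ ^ k * a k - γ ^ k * b k| := by
        simpa only [Real.norm_eq_abs] using norm_tsum_le_tsum_norm hdiff.norm
    _ ≤ ∑' k : ℕ, ((k : ℝ) + 1) * γ ^ k * δ := by
        refine hdiff.abs.tsum_le_tsum (fun k => ?_) hsum.summable
        rw [← mul_sub, abs_mul, abs_pow, abs_of_nonneg hγ0, mul_comm _ (γ ^ k), mul_assoc]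
        exact mul_le_mul_of_nonneg_left (hab k) (pow_nonneg hγ0 k)

end Discounting

section PolicyEvaluation

variable {S A : Type*} [Fintype S] [Fintype A] {P : S → A → S → ℝ} {R : S → A → ℝ}
  {π π₁ π₂ : S → A → ℝ}

variable (P) in
def policyTransition (π : S → A → ℝ) (f : S → ℝ) : S → ℝ :=
  fun t => ∑ a, π t a * ∑ s', P t a s' * f s'

variable (R) in
def policyReward (π : S → A → ℝ) : S → ℝ :=
  fun t => ∑ a, π t a * R t a

variable (P R) in
/-- `expectedReward P R π k s` is `E[R(S_k, A_k) | S_0 = s]` for the chain driven by `π`. -/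
def expectedReward (π : S → A → ℝ) (k : ℕ) : S → ℝ :=
  (policyTransition P π)^[k] (policyReward R π)

theorem expectedReward_succ (k : ℕ) :
    expectedReward P R π (k + 1) = policyTransition P π (expectedReward P R π k) :=
  Function.iterate_succ_apply' ..

theorem policyTransition_sub (f g : S → ℝ) :
    policyTransition P π (f - g) = policyTransition P π f - policyTransition P π g := by
  ext t
  simp only [policyTransition, Pi.sub_apply, mul_sub, sum_sub_distrib]

theorem abs_policyTransition_le (hP : ∀ s a, P s a ∈ stdSimplex ℝ S)
    (hπ : ∀ s, π s ∈ stdSimplex ℝ A) {f : S → ℝ} {C : ℝ} (hf : ∀ s, |f s| ≤ C) (t : S) :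
    |policyTransition P π f t| ≤ C :=
  abs_sum_mul_le_of_mem_stdSimplex (hπ t) fun a => abs_sum_mul_le_of_mem_stdSimplex (hP t a) hf

theorem abs_policyTransition_sub_policyTransition_le (hP : ∀ s a, P s a ∈ stdSimplex ℝ S)
    {f : S → ℝ} {C : ℝ} (hf : ∀ s, |f s| ≤ C) (t : S) :
    |policyTransition P π₁ f t - policyTransition P π₂ f t| ≤ (∑ a, |π₁ t a - π₂ t a|) * C :=
  abs_sum_mul_sub_sum_mul_le fun a => abs_sum_mul_le_of_mem_stdSimplex (hP t a) hf

theorem abs_expectedReward_le (hP : ∀ s a, P s a ∈ stdSimplex ℝ S) (hR : ∀ s a, |R s a| ≤ 1)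
    (hπ : ∀ s, π s ∈ stdSimplex ℝ A) (k : ℕ) (s : S) : |expectedReward P R π k s| ≤ 1 := by
  induction k generalizing s with
  | zero => exact abs_sum_mul_le_of_mem_stdSimplex (hπ s) (hR s)
  | succ k ih =>
    rw [expectedReward_succ]
    exact abs_policyTransition_le hP hπ ih s

theorem abs_expectedReward_sub_le (hP : ∀ s a, P s a ∈ stdSimplex ℝ S) (hR : ∀ s a, |R s a| ≤ 1)
    (hπ₁ : ∀ s, π₁ s ∈ stdSimplex ℝ A) (hπ₂ : ∀ s, π₂ s ∈ stdSimplex ℝ A) {δ : ℝ}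
    (hδ : ∀ s, ∑ a, |π₁ s a - π₂ s a| ≤ δ) (k : ℕ) (s : S) :
    |expectedReward P R π₁ k s - expectedReward P R π₂ k s| ≤ (k + 1) * δ := by
  induction k generalizing s with
  | zero =>
    rw [Nat.cast_zero, zero_add, one_mul]
    calc _ ≤ (∑ a, |π₁ s a - π₂ s a|) * 1 := abs_sum_mul_sub_sum_mul_le (hR s)
      _ ≤ δ := (mul_one _).trans_le (hδ s)
  | succ k ih =>
    set e₁ := expectedReward P R π₁ k
    set e₂ := expectedReward P R π₂ k
    have hsplit : policyTransition P π₁ e₁ s - policyTransition P π₂ e₂ s =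
        policyTransition P π₁ (e₁ - e₂) s +
          (policyTransition P π₁ e₂ s - policyTransition P π₂ e₂ s) := by
      rw [policyTransition_sub, Pi.sub_apply]
      ring
    rw [expectedReward_succ, expectedReward_succ, hsplit]
    calc _ ≤ (k + 1) * δ + (∑ a, |π₁ s a - π₂ s a|) * 1 :=
          (abs_add_le _ _).trans <| add_le_add (abs_policyTransition_le hP hπ₁ (f := e₁ - e₂) ih s)
            (abs_policyTransition_sub_policyTransition_le hP (abs_expectedReward_le hP hR hπ₂ k) s)
      _ ≤ (k + 1) * δ + δ := by rw [mul_one]; exact add_le_add_right (hδ s) _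
      _ = ((k + 1 : ℕ) + 1) * δ := by push_cast; ring

end PolicyEvaluation

/-- Lipschitz continuity of `π ↦ Q^π` in Euclidean norm:
`‖Q^{π₁} - Q^{π₂}‖ ≤ (γ|S||A|/(1-γ)²) ‖π₁ - π₂‖` for a finite MDP with rewards in `[0,1]`. -/
theorem q_lipschitz_in_policy {S A : Type*} [Fintype S] [Fintype A]
    (P : S → A → S → ℝ) (hP0 : ∀ s a s', 0 ≤ P s a s') (hP1 : ∀ s a, ∑ s', P s a s' = 1)
    (R : S → A → ℝ) (hR0 : ∀ s a, 0 ≤ R s a) (hR1 : ∀ s a, R s a ≤ 1)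
    (γ : ℝ) (hγ0 : 0 < γ) (hγ1 : γ < 1)
    (π₁ π₂ : S → A → ℝ)
    (hπ₁0 : ∀ s a, 0 ≤ π₁ s a) (hπ₁1 : ∀ s, ∑ a, π₁ s a = 1)
    (hπ₂0 : ∀ s a, 0 ≤ π₂ s a) (hπ₂1 : ∀ s, ∑ a, π₂ s a = 1)
    (V₁ V₂ : S → ℝ)
    (hV₁ : ∀ s, V₁ s = ∑' k : ℕ, γ ^ k *
      ((fun f t => ∑ a, π₁ t a * ∑ s', P t a s' * f s')^[k]
        (fun t => ∑ a, π₁ t a * R t a)) s)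
    (hV₂ : ∀ s, V₂ s = ∑' k : ℕ, γ ^ k *
      ((fun f t => ∑ a, π₂ t a * ∑ s', P t a s' * f s')^[k]
        (fun t => ∑ a, π₂ t a * R t a)) s)
    (Q₁ Q₂ : S → A → ℝ)
    (hQ₁ : ∀ s a, Q₁ s a = R s a + γ * ∑ s', P s a s' * V₁ s')
    (hQ₂ : ∀ s a, Q₂ s a = R s a + γ * ∑ s', P s a s' * V₂ s') :
    Real.sqrt (∑ s, ∑ a, (Q₁ s a - Q₂ s a) ^ 2)
      ≤ (γ * (Fintype.card S : ℝ) * (Fintype.card A : ℝ) / (1 - γ) ^ 2) *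
          Real.sqrt (∑ s, ∑ a, (π₁ s a - π₂ s a) ^ 2) := by
  have hP : ∀ s a, P s a ∈ stdSimplex ℝ S := fun s a => ⟨hP0 s a, hP1 s a⟩
  have hR : ∀ s a, |R s a| ≤ 1 := fun s a => abs_le.mpr ⟨by linarith [hR0 s a], hR1 s a⟩
  have hπ₁ : ∀ s, π₁ s ∈ stdSimplex ℝ A := fun s => ⟨hπ₁0 s, hπ₁1 s⟩
  have hπ₂ : ∀ s, π₂ s ∈ stdSimplex ℝ A := fun s => ⟨hπ₂0 s, hπ₂1 s⟩
  set δ := ∑ p : S × A, |π₁ p.1 p.2 - π₂ p.1 p.2| with hδ_def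
  have hδ : ∀ s, ∑ a, |π₁ s a - π₂ s a| ≤ δ := fun s => by
    rw [hδ_def, Fintype.sum_prod_type' (fun s a => |π₁ s a - π₂ s a|)]
    exact single_le_sum (f := fun t => ∑ a, |π₁ t a - π₂ t a|)
      (fun t _ => sum_nonneg fun a _ => abs_nonneg _) (mem_univ s)
  have hV : ∀ s, |V₁ s - V₂ s| ≤ δ / (1 - γ) ^ 2 := fun s => by
    rw [hV₁, hV₂]
    exact abs_tsum_pow_mul_sub_le hγ0.le hγ1 (abs_expectedReward_le hP hR hπ₁ · s)
      (abs_expectedReward_le hP hR hπ₂ · s) (abs_expectedReward_sub_le hP hR hπ₁ hπ₂ hδ · s)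
  have hQ : ∀ p : S × A, |Q₁ p.1 p.2 - Q₂ p.1 p.2| ≤ γ / (1 - γ) ^ 2 * δ := fun ⟨s, a⟩ => by
    rw [hQ₁, hQ₂, add_sub_add_left_eq_sub, ← mul_sub, ← sum_sub_distrib, abs_mul,
      abs_of_pos hγ0, div_mul_eq_mul_div, mul_div_assoc]
    simp only [← mul_sub]
    exact mul_le_mul_of_nonneg_left (abs_sum_mul_le_of_mem_stdSimplex (hP s a) hV) hγ0.le
  rw [← Fintype.sum_prod_type' (fun s a => (Q₁ s a - Q₂ s a) ^ 2),
    ← Fintype.sum_prod_type' (fun s a => (π₁ s a - π₂ s a) ^ 2)]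
  calc _ ≤ γ / (1 - γ) ^ 2 * Fintype.card (S × A) * √(∑ p : S × A, (π₁ p.1 p.2 - π₂ p.1 p.2) ^ 2) :=
        sqrt_sum_sq_le_mul_card_mul_of_abs_le (by positivity) hQ
    _ = _ := by rw [Fintype.card_prod, Nat.cast_mul]; ring
end
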